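/- For N points evolving under pairwise repelling interactions dp_i/dt = K₂·Σ_{j≠i}(p_i−p_j)/‖p_i−p_j‖, the sum of all pairwise distances D(t) = Σ_{i<j} ‖p_i(t) − p_j(t)‖ satisfies D'(t) ≥ 2K₂, hence D is strictly increasing; in fact the quantity Σ_i ‖p_i − c‖² (c the fixed centroid) grows at least linearly in t. -/

import Mathlib

open Set
open scoped RealInnerProductSpace

lemma aux_hasDerivAt_norm {E : Type*} [NormedAddCommGroup E] [InnerProductSpace ℝ E]
    {q : ℝ → E} {w : E} {t : ℝ} (hq : HasDerivAt q w t) (h0 : q t ≠ 0) :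
    HasDerivAt (fun s => ‖q s‖) (⟪‖q t‖⁻¹ • q t, w⟫) t := by
  have h1 : HasDerivAt (fun s => ⟪q s, q s⟫) (⟪q t, w⟫ + ⟪w, q t⟫) t :=
    HasDerivAt.inner ℝ hq hq
  have hpos : (0:ℝ) < ⟪q t, q t⟫ := by
    rw [show ⟪q t, q t⟫ = ‖q t‖*‖q t‖ from real_inner_self_eq_norm_mul_norm _]
    exact mul_pos (norm_pos_iff.2 h0) (norm_pos_iff.2 h0)
  have h2 := (Real.hasDerivAt_sqrt (ne_of_gt hpos)).comp t h1
  have heq : (fun s => ‖q s‖) = fun s => Real.sqrt ⟪q s, q s⟫ := by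
    funext s
    rw [real_inner_self_eq_norm_mul_norm, Real.sqrt_mul_self (norm_nonneg _)]
  rw [heq]
  refine HasDerivAt.congr_deriv h2 ?_
  have hn : ‖q t‖ ≠ 0 := norm_ne_zero_iff.2 h0
  rw [real_inner_smul_left, real_inner_comm w (q t)]
  rw [show ⟪q t, q t⟫ = ‖q t‖*‖q t‖ from real_inner_self_eq_norm_mul_norm _,
    Real.sqrt_mul_self (norm_nonneg _)]
  field_simp
  ring

lemma aux_pair_sum {N : ℕ} (F : Fin N → Fin N → ℝ) :
    ∑ i, ∑ j ∈ Finset.univ.erase i, F i j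
      = ∑ i : Fin N, ∑ j ∈ Finset.univ.filter (fun j => i < j), (F i j + F j i) := by
  have h1 : ∀ i : Fin N, Finset.univ.erase i
      = Finset.univ.filter (fun j => i < j) ∪ Finset.univ.filter (fun j => j < i) := by
    intro i; ext j
    simp only [Finset.mem_erase, Finset.mem_union, Finset.mem_filter, Finset.mem_univ,
      true_and, and_true, Fin.lt_def, ← Fin.val_ne_iff]
    omega
  have hdisj : ∀ i : Fin N, Disjoint (Finset.univ.filter (fun j => i < j))
      (Finset.univ.filter (fun j => j < i)) := by
    intro i
    rw [Finset.disjoint_left]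
    intro j hj hj'
    simp only [Finset.mem_filter] at hj hj'
    exact absurd hj'.2 (lt_asymm hj.2)
  have h2 : ∑ i : Fin N, ∑ j ∈ Finset.univ.filter (fun j => j < i), F i j
      = ∑ i : Fin N, ∑ j ∈ Finset.univ.filter (fun j => i < j), F j i := by
    refine Finset.sum_comm' ?_
    intro x y
    simp only [Finset.mem_univ, Finset.mem_filter, true_and, and_true]
  calc ∑ i, ∑ j ∈ Finset.univ.erase i, F i j
      = ∑ i : Fin N, (∑ j ∈ Finset.univ.filter (fun j => i < j), F i j
          + ∑ j ∈ Finset.univ.filter (fun j => j < i), F i j) := by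
        refine Finset.sum_congr rfl fun i _ => ?_
        rw [h1 i, Finset.sum_union (hdisj i)]
    _ = ∑ i : Fin N, ∑ j ∈ Finset.univ.filter (fun j => i < j), F i j
          + ∑ i : Fin N, ∑ j ∈ Finset.univ.filter (fun j => j < i), F i j :=
        Finset.sum_add_distrib
    _ = ∑ i : Fin N, ∑ j ∈ Finset.univ.filter (fun j => i < j), F i j
          + ∑ i : Fin N, ∑ j ∈ Finset.univ.filter (fun j => i < j), F j i := by rw [h2]
    _ = ∑ i : Fin N, ∑ j ∈ Finset.univ.filter (fun j => i < j), (F i j + F j i) := by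
        rw [← Finset.sum_add_distrib]
        exact Finset.sum_congr rfl fun i _ => (Finset.sum_add_distrib).symm

set_option maxHeartbeats 1000000 in
/-- Under pairwise repelling interactions, the sum of all pairwise distances
`D(t) = ∑_{i<j} ‖p_i(t) - p_j(t)‖` has derivative at least `2K₂`, hence is
strictly increasing; moreover the moment `∑ i ‖p_i - c‖²` about the fixed
centroid `c` grows at least linearly in `t`. -/
theorem repelling_pairwise_distances_increase
    (n N : ℕ) (hN : 2 ≤ N) (T K₂ : ℝ) (hT : 0 < T) (hK₂ : 0 < K₂)
    (p : Fin N → ℝ → EuclideanSpace ℝ (Fin n))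
    (hne : ∀ i j : Fin N, i ≠ j → ∀ t ∈ Icc (0:ℝ) T, p i t ≠ p j t)
    (hdyn : ∀ i : Fin N, ∀ t ∈ Icc (0:ℝ) T,
      HasDerivAt (p i)
        (K₂ • ∑ j ∈ Finset.univ.erase i,
          ‖p i t - p j t‖⁻¹ • (p i t - p j t)) t) :
    (∀ t ∈ Icc (0:ℝ) T, ∃ d : ℝ, 2 * K₂ ≤ d ∧
        HasDerivAt (fun s => ∑ i : Fin N, ∑ j ∈ Finset.univ.filter (fun j => i < j),
          ‖p i s - p j s‖) d t) ∧
    StrictMonoOn (fun s => ∑ i : Fin N, ∑ j ∈ Finset.univ.filter (fun j => i < j),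
        ‖p i s - p j s‖) (Icc (0:ℝ) T) ∧
    ∃ a : ℝ, 0 < a ∧ ∀ t ∈ Icc (0:ℝ) T,
      (∑ i : Fin N, ‖p i t - (N:ℝ)⁻¹ • ∑ k, p k 0‖ ^ 2) ≥
        (∑ i : Fin N, ‖p i 0 - (N:ℝ)⁻¹ • ∑ k, p k 0‖ ^ 2) + a * t := by
  classical
  have h01 : (0:ℕ) < N := by omega
  have h11 : (1:ℕ) < N := by omega
  set i0 : Fin N := ⟨0, h01⟩ with hi0def
  set i1 : Fin N := ⟨1, h11⟩ with hi1def
  have hi01 : i0 ≠ i1 := by simp [hi0def, hi1def, Fin.ext_iff]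
  have hi01lt : i0 < i1 := by simp [hi0def, hi1def, Fin.lt_def]
  set u : Fin N → Fin N → ℝ → EuclideanSpace ℝ (Fin n) :=
    fun i j s => ‖p i s - p j s‖⁻¹ • (p i s - p j s) with hu
  set S : Fin N → ℝ → EuclideanSpace ℝ (Fin n) :=
    fun i s => ∑ j ∈ Finset.univ.erase i, u i j s with hSdef
  set D : ℝ → ℝ := fun s => ∑ i : Fin N, ∑ j ∈ Finset.univ.filter (fun j => i < j),
    ‖p i s - p j s‖ with hDdef
  -- antisymmetry of u
  have hanti : ∀ (i j : Fin N) (s : ℝ), u j i s = - u i j s := by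
    intro i j s
    simp only [hu]
    rw [show p j s - p i s = -(p i s - p j s) by abel, norm_neg, smul_neg]
  -- dynamics restated
  have hS : ∀ i : Fin N, ∀ t ∈ Icc (0:ℝ) T, HasDerivAt (p i) (K₂ • S i t) t := by
    intro i t ht
    simpa only [hSdef, hu] using hdyn i t ht
  -- derivative of a pair distance
  have hpair : ∀ i j : Fin N, i ≠ j → ∀ t ∈ Icc (0:ℝ) T,
      HasDerivAt (fun s => ‖p i s - p j s‖) ⟪u i j t, K₂ • S i t - K₂ • S j t⟫ t := by
    intro i j hij t ht
    have hq : HasDerivAt (fun s => p i s - p j s) (K₂ • S i t - K₂ • S j t) t :=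
      (hS i t ht).sub (hS j t ht)
    have h0 : p i t - p j t ≠ 0 := sub_ne_zero.2 (hne i j hij t ht)
    simpa only [hu] using aux_hasDerivAt_norm hq h0
  -- derivative of D
  have hDd : ∀ t ∈ Icc (0:ℝ) T, HasDerivAt D (K₂ * ∑ i, ‖S i t‖^2) t := by
    intro t ht
    have hsum : HasDerivAt D
        (∑ i : Fin N, ∑ j ∈ Finset.univ.filter (fun j => i < j),
          ⟪u i j t, K₂ • S i t - K₂ • S j t⟫) t := by
      rw [hDdef]
      refine HasDerivAt.fun_sum fun i _ => ?_
      refine HasDerivAt.fun_sum fun j hj => ?_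
      exact hpair i j (Finset.mem_filter.1 hj).2.ne t ht
    have hval : ∑ i : Fin N, ∑ j ∈ Finset.univ.filter (fun j => i < j),
          ⟪u i j t, K₂ • S i t - K₂ • S j t⟫
        = K₂ * ∑ i, ‖S i t‖^2 := by
      have hterm : ∀ i j : Fin N, ⟪u i j t, K₂ • S i t - K₂ • S j t⟫
          = K₂ * (⟪u i j t, S i t⟫ + ⟪u j i t, S j t⟫) := by
        intro i j
        rw [inner_sub_right, real_inner_smul_right, real_inner_smul_right, hanti i j,
          inner_neg_left]
        ring
      calc ∑ i : Fin N, ∑ j ∈ Finset.univ.filter (fun j => i < j),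
              ⟪u i j t, K₂ • S i t - K₂ • S j t⟫
          = ∑ i : Fin N, ∑ j ∈ Finset.univ.filter (fun j => i < j),
              K₂ * (⟪u i j t, S i t⟫ + ⟪u j i t, S j t⟫) := by
            exact Finset.sum_congr rfl fun i _ => Finset.sum_congr rfl fun j _ => hterm i j
        _ = K₂ * ∑ i : Fin N, ∑ j ∈ Finset.univ.filter (fun j => i < j),
              (⟪u i j t, S i t⟫ + ⟪u j i t, S j t⟫) := by
            rw [Finset.mul_sum]
            exact Finset.sum_congr rfl fun i _ => (Finset.mul_sum _ _ _).symm
        _ = K₂ * ∑ i : Fin N, ∑ j ∈ Finset.univ.erase i, ⟪u i j t, S i t⟫ := by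
            rw [aux_pair_sum (fun i j => ⟪u i j t, S i t⟫)]
        _ = K₂ * ∑ i, ‖S i t‖^2 := by
            congr 1
            refine Finset.sum_congr rfl fun i _ => ?_
            rw [← sum_inner]
            exact real_inner_self_eq_norm_sq (S i t)
    rw [← hval]
    exact hsum
  -- key geometric lower bound : at a diameter endpoint the force has norm ≥ 1
  have hSlow : ∀ t ∈ Icc (0:ℝ) T, ∀ a b : Fin N, a ≠ b →
      (∀ i j : Fin N, ‖p i t - p j t‖ ≤ ‖p a t - p b t‖) → (1:ℝ) ≤ ‖S a t‖^2 := by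
    intro t ht a b hab hmax
    have hyne : p a t - p b t ≠ 0 := sub_ne_zero.2 (hne a b hab t ht)
    have hynorm : ‖p a t - p b t‖ ≠ 0 := norm_ne_zero_iff.2 hyne
    have hub : ‖u a b t‖ = 1 := by
      simp only [hu, norm_smul, norm_inv, norm_norm]
      field_simp
    have hbmem : b ∈ Finset.univ.erase a := by
      simp [Finset.mem_erase, Ne.symm hab]
    have h1 : (1:ℝ) ≤ ⟪S a t, u a b t⟫ := by
      have hsum : ⟪S a t, u a b t⟫ = ∑ k ∈ Finset.univ.erase a, ⟪u a k t, u a b t⟫ := by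
        rw [hSdef]; exact sum_inner _ _ _
      have hterm : ⟪u a b t, u a b t⟫ = 1 := by
        rw [real_inner_self_eq_norm_sq, hub]; norm_num
      have hnonneg : ∀ k ∈ Finset.univ.erase a, (0:ℝ) ≤ ⟪u a k t, u a b t⟫ := by
        intro k hk
        have hka : a ≠ k := Ne.symm (Finset.mem_erase.1 hk).1
        have hxne : p a t - p k t ≠ 0 := sub_ne_zero.2 (hne a k hka t ht)
        have hin : (0:ℝ) ≤ ⟪p a t - p k t, p a t - p b t⟫ := by
          have h3 : ‖(p a t - p k t) - (p a t - p b t)‖ ≤ ‖p a t - p b t‖ := by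
            rw [show (p a t - p k t) - (p a t - p b t) = p b t - p k t by abel]
            exact hmax b k
          nlinarith [norm_sub_sq_real (p a t - p k t) (p a t - p b t),
            norm_nonneg ((p a t - p k t) - (p a t - p b t)), norm_nonneg (p a t - p b t),
            sq_nonneg ‖p a t - p k t‖]
        simp only [hu]
        rw [real_inner_smul_left, real_inner_smul_right]
        exact mul_nonneg (inv_nonneg.2 (norm_nonneg _))
          (mul_nonneg (inv_nonneg.2 (norm_nonneg _)) hin)
      calc (1:ℝ) = ⟪u a b t, u a b t⟫ := hterm.symm
        _ ≤ ∑ k ∈ Finset.univ.erase a, ⟪u a k t, u a b t⟫ :=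
            Finset.single_le_sum hnonneg hbmem
        _ = ⟪S a t, u a b t⟫ := hsum.symm
    have h2 : ⟪S a t, u a b t⟫ ≤ ‖S a t‖ := by
      calc ⟪S a t, u a b t⟫ ≤ ‖S a t‖ * ‖u a b t‖ := real_inner_le_norm _ _
        _ = ‖S a t‖ := by rw [hub, mul_one]
    nlinarith [norm_nonneg (S a t)]
  -- the global lower bound on the derivative
  have hper : ∀ t ∈ Icc (0:ℝ) T, (2:ℝ) ≤ ∑ i, ‖S i t‖^2 := by
    intro t ht
    obtain ⟨q, hqmem, hmax⟩ := Finset.exists_max_image (Finset.univ ×ˢ Finset.univ)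
      (fun q : Fin N × Fin N => ‖p q.1 t - p q.2 t‖) ⟨(i0, i1), by simp⟩
    have hmax' : ∀ i j : Fin N, ‖p i t - p j t‖ ≤ ‖p q.1 t - p q.2 t‖ :=
      fun i j => hmax (i, j) (by simp)
    have hab : q.1 ≠ q.2 := by
      intro h
      have h0 : ‖p i0 t - p i1 t‖ ≤ 0 := by
        have := hmax' i0 i1
        rw [h] at this
        simpa using this
      have h3 : p i0 t ≠ p i1 t := hne i0 i1 hi01 t ht
      have : (0:ℝ) < ‖p i0 t - p i1 t‖ := norm_pos_iff.2 (sub_ne_zero.2 h3)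
      linarith
    have hmax'' : ∀ i j : Fin N, ‖p i t - p j t‖ ≤ ‖p q.2 t - p q.1 t‖ := by
      intro i j; exact (hmax' i j).trans_eq (norm_sub_rev _ _)
    have ha := hSlow t ht q.1 q.2 hab hmax'
    have hb := hSlow t ht q.2 q.1 hab.symm hmax''
    have hsub := Finset.sum_le_sum_of_subset_of_nonneg
      (Finset.subset_univ ({q.1, q.2} : Finset (Fin N)))
      (fun i _ _ => sq_nonneg ‖S i t‖)
    rw [Finset.sum_pair hab] at hsub
    linarith
  have hIcc0 : (0:ℝ) ∈ Icc (0:ℝ) T := ⟨le_refl _, hT.le⟩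
  -- Part 1
  have part1 : ∀ t ∈ Icc (0:ℝ) T, ∃ d : ℝ, 2 * K₂ ≤ d ∧ HasDerivAt D d t := by
    intro t ht
    refine ⟨K₂ * ∑ i, ‖S i t‖^2, ?_, hDd t ht⟩
    nlinarith [hper t ht]
  -- Part 2
  have part2 : StrictMonoOn D (Icc (0:ℝ) T) := by
    refine strictMonoOn_of_deriv_pos (convex_Icc 0 T) ?_ ?_
    · intro t ht
      exact (hDd t ht).continuousAt.continuousWithinAt
    · intro t ht
      rw [interior_Icc] at ht
      have ht' : t ∈ Icc (0:ℝ) T := Ioo_subset_Icc_self ht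
      rw [(hDd t ht').deriv]
      nlinarith [hper t ht']
  refine ⟨part1, part2, ?_⟩
  -- Part 3
  set c : EuclideanSpace ℝ (Fin n) := (N:ℝ)⁻¹ • ∑ k, p k 0 with hcdef
  set M : ℝ → ℝ := fun s => ∑ i : Fin N, ‖p i s - c‖^2 with hMdef
  have hD0 : 0 < D 0 := by
    have h1 : ‖p i0 0 - p i1 0‖ ≤ ∑ j ∈ Finset.univ.filter (fun j => i0 < j),
        ‖p i0 0 - p j 0‖ :=
      Finset.single_le_sum (f := fun j => ‖p i0 0 - p j 0‖) (fun j _ => norm_nonneg _)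
        (Finset.mem_filter.2 ⟨Finset.mem_univ _, hi01lt⟩)
    have h2 : ∑ j ∈ Finset.univ.filter (fun j => i0 < j), ‖p i0 0 - p j 0‖ ≤ D 0 := by
      rw [hDdef]
      exact Finset.single_le_sum
        (f := fun i => ∑ j ∈ Finset.univ.filter (fun j => i < j), ‖p i 0 - p j 0‖)
        (fun i _ => Finset.sum_nonneg fun j _ => norm_nonneg _) (Finset.mem_univ i0)
    have h3 : (0:ℝ) < ‖p i0 0 - p i1 0‖ :=
      norm_pos_iff.2 (sub_ne_zero.2 (hne i0 i1 hi01 0 hIcc0))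
    linarith
  -- derivative of M
  have hMd : ∀ t ∈ Icc (0:ℝ) T, HasDerivAt M (2 * K₂ * D t) t := by
    intro t ht
    have hsum : HasDerivAt M
        (∑ i : Fin N, (⟪p i t - c, K₂ • S i t⟫ + ⟪K₂ • S i t, p i t - c⟫)) t := by
      rw [hMdef]
      refine HasDerivAt.fun_sum fun i _ => ?_
      have hqi : HasDerivAt (fun s => p i s - c) (K₂ • S i t) t := (hS i t ht).sub_const c
      have hinner := HasDerivAt.inner ℝ hqi hqi
      have heq : (fun s => ‖p i s - c‖^2) = fun s => ⟪p i s - c, p i s - c⟫ := by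
        funext s; rw [real_inner_self_eq_norm_sq]
      rw [heq]
      exact hinner
    have hval : ∑ i : Fin N, (⟪p i t - c, K₂ • S i t⟫ + ⟪K₂ • S i t, p i t - c⟫)
        = 2 * K₂ * D t := by
      have hstep1 : ∀ i : Fin N, ⟪p i t - c, K₂ • S i t⟫ + ⟪K₂ • S i t, p i t - c⟫
          = 2 * K₂ * ∑ j ∈ Finset.univ.erase i, ⟪p i t - c, u i j t⟫ := by
        intro i
        have e1 : ⟪K₂ • S i t, p i t - c⟫ = ⟪p i t - c, K₂ • S i t⟫ := real_inner_comm _ _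
        have e2 : ⟪p i t - c, K₂ • S i t⟫ = K₂ * ⟪p i t - c, S i t⟫ :=
          real_inner_smul_right _ _ _
        have e3 : ⟪p i t - c, S i t⟫
            = ∑ j ∈ Finset.univ.erase i, ⟪p i t - c, u i j t⟫ := inner_sum _ _ _
        rw [e1, e2, e3, Finset.mul_sum, ← Finset.sum_add_distrib, Finset.mul_sum]
        exact Finset.sum_congr rfl fun j _ => by ring
      calc ∑ i : Fin N, (⟪p i t - c, K₂ • S i t⟫ + ⟪K₂ • S i t, p i t - c⟫)
          = ∑ i : Fin N, 2 * K₂ * ∑ j ∈ Finset.univ.erase i, ⟪p i t - c, u i j t⟫ :=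
            Finset.sum_congr rfl fun i _ => hstep1 i
        _ = 2 * K₂ * ∑ i : Fin N, ∑ j ∈ Finset.univ.erase i, ⟪p i t - c, u i j t⟫ := by
            rw [Finset.mul_sum]
        _ = 2 * K₂ * ∑ i : Fin N, ∑ j ∈ Finset.univ.filter (fun j => i < j),
              (⟪p i t - c, u i j t⟫ + ⟪p j t - c, u j i t⟫) := by
            rw [aux_pair_sum (fun i j => ⟪p i t - c, u i j t⟫)]
        _ = 2 * K₂ * D t := by
            rw [hDdef]
            congr 1
            refine Finset.sum_congr rfl fun i _ => Finset.sum_congr rfl fun j hj => ?_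
            have hij : i ≠ j := (Finset.mem_filter.1 hj).2.ne
            have hyne : p i t - p j t ≠ 0 := sub_ne_zero.2 (hne i j hij t ht)
            have hynorm : ‖p i t - p j t‖ ≠ 0 := norm_ne_zero_iff.2 hyne
            rw [hanti i j, inner_neg_right, ← sub_eq_add_neg, ← inner_sub_left,
              show (p i t - c) - (p j t - c) = p i t - p j t by abel]
            simp only [hu]
            rw [real_inner_smul_right,
              show ⟪p i t - p j t, p i t - p j t⟫ = ‖p i t - p j t‖ * ‖p i t - p j t‖ from
                real_inner_self_eq_norm_mul_norm _]
            field_simp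
    rw [← hval]
    exact hsum
  refine ⟨2 * K₂ * D 0, by positivity, ?_⟩
  -- monotonicity of s ↦ M s - (2K₂ D 0) s
  have hg : ∀ t ∈ Icc (0:ℝ) T,
      HasDerivAt (fun s => M s - (2 * K₂ * D 0) * s) (2 * K₂ * D t - 2 * K₂ * D 0) t := by
    intro t ht
    have h1 : HasDerivAt (fun s : ℝ => (2 * K₂ * D 0) * s) (2 * K₂ * D 0) t := by
      simpa using (hasDerivAt_id t).const_mul (2 * K₂ * D 0)
    exact (hMd t ht).sub h1
  have hmono : MonotoneOn (fun s => M s - (2 * K₂ * D 0) * s) (Icc (0:ℝ) T) := by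
    refine monotoneOn_of_deriv_nonneg (convex_Icc 0 T) ?_ ?_ ?_
    · intro t ht
      exact (hg t ht).continuousAt.continuousWithinAt
    · intro t ht
      rw [interior_Icc] at ht
      exact ((hg t (Ioo_subset_Icc_self ht)).differentiableAt).differentiableWithinAt
    · intro t ht
      rw [interior_Icc] at ht
      have ht' : t ∈ Icc (0:ℝ) T := Ioo_subset_Icc_self ht
      rw [(hg t ht').deriv]
      have : D 0 ≤ D t := (part2 hIcc0 ht' ht.1).le
      nlinarith
  intro t ht
  have := hmono hIcc0 ht ht.1
  simp only [mul_zero, sub_zero] at this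
  have hineq : M 0 ≤ M t - 2 * K₂ * D 0 * t := by linarith
  show M t ≥ M 0 + 2 * K₂ * D 0 * t
  linarith
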